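/- Assume the subsonic condition γρ*^{γ−1} > m*²/ρ*². Then there exist constants C > 0 and ω₀ > 0 such that for every ξ ∈ ℝ and every differentiable function V : [0, ∞) → ℂ² satisfying V'(t) = −( iξ·Â(ξ) + ξ²·B* )·V(t) for all t ≥ 0, one has |V(t)| ≤ C·exp(−ω₀ ξ² t)·|V(0)| for all t ≥ 0, where |·| is the Euclidean norm on ℂ². -/

import Mathlib

open Matrix

/-- `α(ξ) = p'(ρ*) − m*²/ρ*² + (k²/2)ξ²` with `p(ρ) = ρ^γ`. -/
noncomputable def alphaSym (ρs ms k γ ξ : ℝ) : ℝ :=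
  γ * ρs ^ (γ - 1) - ms ^ 2 / ρs ^ 2 + k ^ 2 / 2 * ξ ^ 2

/-- The symmetric rescaled symbol `Â(ξ)` of the linearized viscous QHD system, over `ℂ`. -/
noncomputable def Ahat (ρs ms k γ ξ : ℝ) : Matrix (Fin 2) (Fin 2) ℂ :=
  !![0, ((Real.sqrt (alphaSym ρs ms k γ ξ) : ℝ) : ℂ);
     ((Real.sqrt (alphaSym ρs ms k γ ξ) : ℝ) : ℂ), ((2 * ms / ρs : ℝ) : ℂ)]

set_option maxHeartbeats 1000000 in
private lemma key_ineq (μ b δ ω' ξ a C₁ C₂ n m P Q : ℝ)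
    (hμ : 0 < μ) (hδ0 : 0 < δ) (ha0 : 0 < a)
    (hC1 : 0 ≤ C₁) (hC2 : 0 ≤ C₂)
    (hδ1 : δ * (1 + (C₁ + C₂)^2) ≤ μ)
    (hω0 : 0 ≤ ω') (hω1 : ω' ≤ (4/5)*(δ/2)) (hω2 : ω' ≤ (4/5)*μ)
    (hb : |b| ≤ C₁*a) (hxiμ : μ*|ξ| ≤ C₂*a) (hxiδ : δ*|ξ| ≤ a/2)
    (hn : 0 ≤ n) (hm : 0 ≤ m) (hPQ : P^2 + Q^2 ≤ n*m) :
    -2*μ*m*a + δ*(m-n)*a - δ*b*P - δ*ξ*μ*Q + ω'*(n+m)*a + ω'*δ*ξ*Q ≤ 0 := by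
  set p := Real.sqrt n with hp
  set q := Real.sqrt m with hq
  have hp2 : p^2 = n := Real.sq_sqrt hn
  have hq2 : q^2 = m := Real.sq_sqrt hm
  have hp0 : 0 ≤ p := Real.sqrt_nonneg n
  have hq0 : 0 ≤ q := Real.sqrt_nonneg m
  have hPle : |P| ≤ p*q := by
    rw [← Real.sqrt_sq_eq_abs, hp, hq, ← Real.sqrt_mul hn]
    exact Real.sqrt_le_sqrt (by nlinarith [sq_nonneg Q])
  have hQle : |Q| ≤ p*q := by
    rw [← Real.sqrt_sq_eq_abs, hp, hq, ← Real.sqrt_mul hn]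
    exact Real.sqrt_le_sqrt (by nlinarith [sq_nonneg P])
  clear_value p q
  clear hp hq hPQ
  have hpq : p*q ≤ (n+m)/2 := by nlinarith [sq_nonneg (p - q)]
  have hpq0 : 0 ≤ p*q := mul_nonneg hp0 hq0
  have h1 : -(δ*b*P) ≤ δ*(C₁*(p*q)*a) := by
    have e1 : -(b*P) ≤ (C₁*a)*(p*q) := by
      refine (neg_le_abs _).trans ?_
      rw [abs_mul]
      exact mul_le_mul hb hPle (abs_nonneg P) (by positivity)
    have := mul_le_mul_of_nonneg_left e1 hδ0.le
    have e2 : δ*(-(b*P)) = -(δ*b*P) := by ring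
    have e3 : δ*((C₁*a)*(p*q)) = δ*(C₁*(p*q)*a) := by ring
    linarith [this]
  have h2 : -(δ*ξ*μ*Q) ≤ δ*(C₂*(p*q)*a) := by
    have e1 : -(ξ*μ*Q) ≤ (C₂*a)*(p*q) := by
      refine (neg_le_abs _).trans ?_
      have : |ξ*μ*Q| = (μ*|ξ|)*|Q| := by
        rw [abs_mul, abs_mul, abs_of_pos hμ]; ring
      rw [this]
      exact mul_le_mul hxiμ hQle (abs_nonneg Q) (by positivity)
    have := mul_le_mul_of_nonneg_left e1 hδ0.le
    have e2 : δ*(-(ξ*μ*Q)) = -(δ*ξ*μ*Q) := by ring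
    have e3 : δ*((C₂*a)*(p*q)) = δ*(C₂*(p*q)*a) := by ring
    linarith [this]
  have h3 : ω'*δ*ξ*Q ≤ ω'*((n+m)/4*a) := by
    have e1 : δ*ξ*Q ≤ (a/2)*(p*q) := by
      refine (le_abs_self _).trans ?_
      have : |δ*ξ*Q| = (δ*|ξ|)*|Q| := by
        rw [abs_mul, abs_mul, abs_of_pos hδ0]
      rw [this]
      exact mul_le_mul hxiδ hQle (abs_nonneg Q) (by positivity)
    have e2 : (a/2)*(p*q) ≤ (a/2)*((n+m)/2) := by
      apply mul_le_mul_of_nonneg_left hpq (by positivity)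
    have := mul_le_mul_of_nonneg_left (e1.trans e2) hω0
    have e3 : ω'*(δ*ξ*Q) = ω'*δ*ξ*Q := by ring
    have e4 : ω'*((a/2)*((n+m)/2)) = ω'*((n+m)/4*a) := by ring
    linarith [this]
  have h4 : δ*((C₁+C₂)*(p*q))*a ≤ δ*(n/4 + (C₁+C₂)^2*m)*a := by
    have : (C₁+C₂)*(p*q) ≤ n/4 + (C₁+C₂)^2*m := by
      nlinarith [sq_nonneg (p/2 - (C₁+C₂)*q)]
    apply mul_le_mul_of_nonneg_right _ ha0.le
    exact mul_le_mul_of_nonneg_left this hδ0.le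
  have t1 : 0 ≤ n*(3*δ/4 - 5*ω'/4) := mul_nonneg hn (by linarith)
  have t2 : 0 ≤ m*(2*μ - δ - δ*(C₁+C₂)^2 - 5*ω'/4) := by
    apply mul_nonneg hm
    nlinarith [hδ1]
  have hbra : (-2*μ*m + δ*m - δ*n + δ*(n/4 + (C₁+C₂)^2*m) + 5/4*ω'*(n+m)) * a ≤ 0 := by
    apply mul_nonpos_of_nonpos_of_nonneg _ ha0.le
    nlinarith [t1, t2]
  nlinarith [h1, h2, h3, h4, hbra]


set_option maxHeartbeats 2000000 in
/-- Basic pointwise decay estimate: under the subsonic condition there are uniform constants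
`C, ω₀ > 0` such that every solution of `V' = −(iξÂ(ξ) + ξ²B*)V` on `[0,∞)` satisfies
`|V(t)| ≤ C·exp(−ω₀ξ²t)·|V(0)|`, with `|·|` the Euclidean norm on `ℂ²`. -/
theorem subsonic_pointwise_decay
    (ρs ms μ k γ : ℝ) (hρ : 0 < ρs) (hμ : 0 < μ) (hk : 0 < k) (hγ : 1 < γ)
    (hsub : ms ^ 2 / ρs ^ 2 < γ * ρs ^ (γ - 1)) :
    ∃ C ω₀ : ℝ, 0 < C ∧ 0 < ω₀ ∧
      ∀ ξ : ℝ, ∀ V : ℝ → Fin 2 → ℂ,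
        (∀ t : ℝ, 0 ≤ t →
          HasDerivWithinAt V
            (-(((Complex.I * (ξ : ℂ)) • Ahat ρs ms k γ ξ
                + ((ξ ^ 2 : ℝ) : ℂ) • (!![0, 0; 0, ((μ : ℝ) : ℂ)] : Matrix (Fin 2) (Fin 2) ℂ)).mulVec
              (V t)))
            (Set.Ici 0) t) →
        ∀ t : ℝ, 0 ≤ t →
          Real.sqrt (‖V t 0‖ ^ 2 + ‖V t 1‖ ^ 2) ≤
            C * Real.exp (-ω₀ * ξ ^ 2 * t) *
              Real.sqrt (‖V 0 0‖ ^ 2 + ‖V 0 1‖ ^ 2) := by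
  have hα₀ : 0 < γ * ρs ^ (γ - 1) - ms ^ 2 / ρs ^ 2 := sub_pos.2 hsub
  set α₀ := γ * ρs ^ (γ - 1) - ms ^ 2 / ρs ^ 2 with hα₀def
  set s := Real.sqrt α₀ with hsdef
  have hs : 0 < s := Real.sqrt_pos.2 hα₀
  set b := 2*ms/ρs with hbdef
  set C₁ := |b|/s with hC1def
  set C₂ := 2*μ/k with hC2def
  have hC1 : 0 ≤ C₁ := by positivity
  have hC2 : 0 ≤ C₂ := by positivity
  set δ := min (μ/(1+(C₁+C₂)^2)) (k/4) with hδdef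
  have hδ0 : 0 < δ := lt_min (by positivity) (by positivity)
  have hδ1 : δ*(1+(C₁+C₂)^2) ≤ μ := by
    rw [← le_div_iff₀ (by positivity)]
    exact min_le_left _ _
  have hδ2 : δ ≤ k/4 := min_le_right _ _
  set ω₀ := (2/5) * min (δ/2) μ with hω₀def
  have hmin0 : 0 < min (δ/2) μ := lt_min (by positivity) hμ
  have hω₀ : 0 < ω₀ := by rw [hω₀def]; positivity
  refine ⟨Real.sqrt 3, ω₀, Real.sqrt_pos.2 (by norm_num), hω₀, ?_⟩
  intro ξ V hV
  set a := Real.sqrt (alphaSym ρs ms k γ ξ) with hadef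
  have halpha : alphaSym ρs ms k γ ξ = α₀ + k^2/2*ξ^2 := by
    rw [alphaSym, hα₀def]
  have halpha0 : 0 ≤ alphaSym ρs ms k γ ξ := by
    rw [halpha]; nlinarith [sq_nonneg ξ]
  have ha2 : a^2 = α₀ + k^2/2*ξ^2 := by
    rw [hadef, Real.sq_sqrt halpha0, halpha]
  have ha0 : 0 < a := Real.sqrt_pos.2 (by rw [halpha]; nlinarith [sq_nonneg ξ])
  have has : s ≤ a := by
    rw [hsdef, hadef]
    apply Real.sqrt_le_sqrt
    rw [halpha]; nlinarith [sq_nonneg ξ]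
  have hb : |b| ≤ C₁*a := by
    rw [hC1def, div_mul_eq_mul_div, le_div_iff₀ hs]
    exact mul_le_mul_of_nonneg_left has (abs_nonneg b)
  have hka : k*|ξ| ≤ 2*a := by
    have h4 : (k*|ξ|)^2 ≤ (2*a)^2 := by
      rw [mul_pow, mul_pow, sq_abs]
      nlinarith [ha2, sq_nonneg ξ]
    have := Real.sqrt_le_sqrt h4
    rwa [Real.sqrt_sq (by positivity), Real.sqrt_sq (by positivity)] at this
  have hxiμ : μ*|ξ| ≤ C₂*a := by
    rw [hC2def, div_mul_eq_mul_div, le_div_iff₀ hk]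
    nlinarith [hka, abs_nonneg ξ]
  have hxiδ : δ*|ξ| ≤ a/2 := by
    nlinarith [hka, mul_nonneg (by linarith : (0:ℝ) ≤ k/4 - δ) (abs_nonneg ξ)]
  set ω' := 2*ω₀ with hω'def
  have hω'1 : ω' ≤ (4/5)*(δ/2) := by
    rw [hω'def, hω₀def]
    have := min_le_left (δ/2) μ
    linarith
  have hω'2 : ω' ≤ (4/5)*μ := by
    rw [hω'def, hω₀def]
    have := min_le_right (δ/2) μ
    linarith
  have hω'0 : 0 ≤ ω' := by rw [hω'def]; linarith
  -- component derivatives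
  have hw0 : ∀ t, 0 ≤ t → HasDerivWithinAt (fun t => V t 0)
      (-(Complex.I*ξ*a*V t 1)) (Set.Ici 0) t := by
    intro t ht
    have := hasDerivWithinAt_pi.1 (hV t ht) 0
    refine this.congr_deriv ?_
    simp [Ahat, Matrix.mulVec, dotProduct, Fin.sum_univ_two, ← hadef]
  have hw1 : ∀ t, 0 ≤ t → HasDerivWithinAt (fun t => V t 1)
      (-(Complex.I*ξ*a*V t 0 + (Complex.I*ξ*(b:ℝ) + ((ξ^2*μ:ℝ):ℂ))*V t 1)) (Set.Ici 0) t := by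
    intro t ht
    have := hasDerivWithinAt_pi.1 (hV t ht) 1
    refine this.congr_deriv ?_
    simp [Ahat, Matrix.mulVec, dotProduct, Fin.sum_univ_two, ← hadef, hbdef]
    try push_cast
    try ring
  have hu1 : ∀ t, 0 ≤ t → HasDerivWithinAt (fun t => (V t 0).re)
      (ξ*a*(V t 1).im) (Set.Ici 0) t := by
    intro t ht
    have := Complex.reCLM.hasFDerivAt.comp_hasDerivWithinAt t (hw0 t ht)
    refine this.congr_deriv ?_
    simp [Complex.mul_re, Complex.mul_im, ← Complex.ofReal_pow]
    try ring
  have hu2 : ∀ t, 0 ≤ t → HasDerivWithinAt (fun t => (V t 0).im)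
      (-(ξ*a)*(V t 1).re) (Set.Ici 0) t := by
    intro t ht
    have := Complex.imCLM.hasFDerivAt.comp_hasDerivWithinAt t (hw0 t ht)
    refine this.congr_deriv ?_
    simp [Complex.mul_re, Complex.mul_im, ← Complex.ofReal_pow]
    try ring
  have hv1 : ∀ t, 0 ≤ t → HasDerivWithinAt (fun t => (V t 1).re)
      (ξ*a*(V t 0).im + ξ*b*(V t 1).im - ξ^2*μ*(V t 1).re) (Set.Ici 0) t := by
    intro t ht
    have := Complex.reCLM.hasFDerivAt.comp_hasDerivWithinAt t (hw1 t ht)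
    refine this.congr_deriv ?_
    simp [Complex.mul_re, Complex.mul_im, Complex.add_re, Complex.add_im, ← Complex.ofReal_pow]
    try ring
  have hv2 : ∀ t, 0 ≤ t → HasDerivWithinAt (fun t => (V t 1).im)
      (-(ξ*a*(V t 0).re) - ξ*b*(V t 1).re - ξ^2*μ*(V t 1).im) (Set.Ici 0) t := by
    intro t ht
    have := Complex.imCLM.hasFDerivAt.comp_hasDerivWithinAt t (hw1 t ht)
    refine this.congr_deriv ?_
    simp [Complex.mul_re, Complex.mul_im, Complex.add_re, Complex.add_im, ← Complex.ofReal_pow]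
    try ring
  -- the Lyapunov functional
  set E : ℝ → ℝ := fun t =>
    (V t 0).re*(V t 0).re + (V t 0).im*(V t 0).im + (V t 1).re*(V t 1).re +
      (V t 1).im*(V t 1).im +
      (δ*ξ/a)*((V t 0).re*(V t 1).im - (V t 0).im*(V t 1).re) with hEdef
  set Ed : ℝ → ℝ := fun t =>
    2*(V t 0).re*(ξ*a*(V t 1).im) + 2*(V t 0).im*(-(ξ*a)*(V t 1).re)
      + 2*(V t 1).re*(ξ*a*(V t 0).im + ξ*b*(V t 1).im - ξ^2*μ*(V t 1).re)
      + 2*(V t 1).im*(-(ξ*a*(V t 0).re) - ξ*b*(V t 1).re - ξ^2*μ*(V t 1).im)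
      + (δ*ξ/a)*((ξ*a*(V t 1).im)*(V t 1).im
          + (V t 0).re*(-(ξ*a*(V t 0).re) - ξ*b*(V t 1).re - ξ^2*μ*(V t 1).im)
          - (-(ξ*a)*(V t 1).re)*(V t 1).re
          - (V t 0).im*(ξ*a*(V t 0).im + ξ*b*(V t 1).im - ξ^2*μ*(V t 1).re)) with hEddef
  have hE : ∀ t, 0 ≤ t → HasDerivWithinAt E (Ed t) (Set.Ici 0) t := by
    intro t ht
    have h := (((((hu1 t ht).mul (hu1 t ht)).add ((hu2 t ht).mul (hu2 t ht))).add
        ((hv1 t ht).mul (hv1 t ht))).add ((hv2 t ht).mul (hv2 t ht))).add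
        ((((hu1 t ht).mul (hv2 t ht)).sub ((hu2 t ht).mul (hv1 t ht))).const_mul (δ*ξ/a))
    refine h.congr_deriv ?_
    rw [hEddef]
    ring
  have hkey : ∀ t : ℝ, Ed t + ω'*ξ^2*E t ≤ 0 := by
    intro t
    have hX := key_ineq μ b δ ω' ξ a C₁ C₂
      ((V t 0).re*(V t 0).re + (V t 0).im*(V t 0).im)
      ((V t 1).re*(V t 1).re + (V t 1).im*(V t 1).im)
      ((V t 0).re*(V t 1).re + (V t 0).im*(V t 1).im)
      ((V t 0).re*(V t 1).im - (V t 0).im*(V t 1).re)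
      hμ hδ0 ha0 hC1 hC2 hδ1 hω'0 hω'1 hω'2 hb hxiμ hxiδ
      (by nlinarith [sq_nonneg (V t 0).re, sq_nonneg (V t 0).im])
      (by nlinarith [sq_nonneg (V t 1).re, sq_nonneg (V t 1).im])
      (le_of_eq (by ring))
    have hfac : a * (Ed t + ω'*ξ^2*E t) = ξ^2 *
        (-2*μ*((V t 1).re*(V t 1).re + (V t 1).im*(V t 1).im)*a
          + δ*(((V t 1).re*(V t 1).re + (V t 1).im*(V t 1).im)
              - ((V t 0).re*(V t 0).re + (V t 0).im*(V t 0).im))*a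
          - δ*b*((V t 0).re*(V t 1).re + (V t 0).im*(V t 1).im)
          - δ*ξ*μ*((V t 0).re*(V t 1).im - (V t 0).im*(V t 1).re)
          + ω'*(((V t 0).re*(V t 0).re + (V t 0).im*(V t 0).im)
              + ((V t 1).re*(V t 1).re + (V t 1).im*(V t 1).im))*a
          + ω'*δ*ξ*((V t 0).re*(V t 1).im - (V t 0).im*(V t 1).re)) := by
      rw [hEddef, hEdef]
      field_simp
      ring
    have h1 : ξ^2 * _ ≤ 0 := mul_nonpos_of_nonneg_of_nonpos (sq_nonneg ξ) hX
    have h2 : a * (Ed t + ω'*ξ^2*E t) ≤ 0 := by rw [hfac]; exact h1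
    by_contra hcon
    push_neg at hcon
    nlinarith [mul_pos ha0 hcon]
  -- G is antitone
  set G : ℝ → ℝ := fun t => E t * Real.exp (ω'*ξ^2*t) with hGdef
  have hG : ∀ t, 0 ≤ t → HasDerivWithinAt G
      (Ed t * Real.exp (ω'*ξ^2*t) + E t * (Real.exp (ω'*ξ^2*t) * (ω'*ξ^2))) (Set.Ici 0) t := by
    intro t ht
    have h1 : HasDerivAt (fun t : ℝ => ω'*ξ^2*t) (ω'*ξ^2) t := by
      simpa using (hasDerivAt_id t).const_mul (ω'*ξ^2)
    exact (hE t ht).mul h1.exp.hasDerivWithinAt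
  have hanti : AntitoneOn G (Set.Ici 0) := by
    apply antitoneOn_of_deriv_nonpos (convex_Ici 0)
    · intro x hx
      exact (hG x hx).continuousWithinAt
    · intro x hx
      rw [interior_Ici] at hx
      exact ((hG x (le_of_lt hx)).hasDerivAt (Ici_mem_nhds hx)).differentiableAt.differentiableWithinAt
    · intro x hx
      rw [interior_Ici] at hx
      rw [((hG x (le_of_lt hx)).hasDerivAt (Ici_mem_nhds hx)).deriv]
      have hk1 := hkey x
      have hexp0 : (0:ℝ) < Real.exp (ω'*ξ^2*x) := Real.exp_pos _
      nlinarith [mul_nonpos_of_nonneg_of_nonpos hexp0.le hk1]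
  -- E bounds
  have hQb : ∀ t : ℝ, |(V t 0).re*(V t 1).im - (V t 0).im*(V t 1).re| ≤
      ((V t 0).re*(V t 0).re + (V t 0).im*(V t 0).im + (V t 1).re*(V t 1).re +
        (V t 1).im*(V t 1).im)/2 := by
    intro t
    rw [abs_le]
    constructor
    · nlinarith [sq_nonneg ((V t 0).re + (V t 1).im), sq_nonneg ((V t 0).im - (V t 1).re)]
    · nlinarith [sq_nonneg ((V t 0).re - (V t 1).im), sq_nonneg ((V t 0).im + (V t 1).re)]
  have hδ' : |δ*ξ/a| ≤ 1/2 := by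
    rw [abs_div, abs_of_pos ha0, abs_mul, abs_of_pos hδ0, div_le_iff₀ ha0]
    linarith [hxiδ]
  have hEb : ∀ t : ℝ,
      3/4*((V t 0).re*(V t 0).re + (V t 0).im*(V t 0).im + (V t 1).re*(V t 1).re +
        (V t 1).im*(V t 1).im) ≤ E t ∧
      E t ≤ 5/4*((V t 0).re*(V t 0).re + (V t 0).im*(V t 0).im + (V t 1).re*(V t 1).re +
        (V t 1).im*(V t 1).im) := by
    intro t
    have h1 := hQb t
    have h2 : |(δ*ξ/a)*((V t 0).re*(V t 1).im - (V t 0).im*(V t 1).re)| ≤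
        (1/2)*(((V t 0).re*(V t 0).re + (V t 0).im*(V t 0).im + (V t 1).re*(V t 1).re +
          (V t 1).im*(V t 1).im)/2) := by
      rw [abs_mul]
      exact mul_le_mul hδ' h1 (abs_nonneg _) (by norm_num)
    have h3 := abs_le.1 h2
    rw [hEdef]
    constructor <;> [linarith [h3.1]; linarith [h3.2]]
  clear_value E Ed G
  intro t ht
  have hGle : G t ≤ G 0 := hanti (Set.self_mem_Ici) ht ht
  have hexpt : (0:ℝ) < Real.exp (ω'*ξ^2*t) := Real.exp_pos _
  have hEt : E t * Real.exp (ω'*ξ^2*t) ≤ E 0 := by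
    have := hGle
    rw [hGdef] at this
    simpa using this
  have habs : ∀ z : ℂ, ‖z‖^2 = z.re*z.re + z.im*z.im := fun z => by
    rw [Complex.sq_norm, Complex.normSq_apply]
  have hA : ∀ τ : ℝ, ‖V τ 0‖^2 + ‖V τ 1‖^2 =
      (V τ 0).re*(V τ 0).re + (V τ 0).im*(V τ 0).im + (V τ 1).re*(V τ 1).re +
        (V τ 1).im*(V τ 1).im := fun τ => by rw [habs, habs]; ring
  have hAt0 : 0 ≤ ‖V t 0‖^2 + ‖V t 1‖^2 := by positivity
  have hA00 : 0 ≤ ‖V 0 0‖^2 + ‖V 0 1‖^2 := by positivity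
  have hchain : ‖V t 0‖^2 + ‖V t 1‖^2 ≤
      3 * Real.exp (-(ω'*ξ^2*t)) * (‖V 0 0‖^2 + ‖V 0 1‖^2) := by
    have hl := (hEb t).1
    have hu := (hEb 0).2
    rw [← hA t] at hl
    rw [← hA 0] at hu
    have hexpneg : (0:ℝ) < Real.exp (-(ω'*ξ^2*t)) := Real.exp_pos _
    have hEinv : E t ≤ E 0 * Real.exp (-(ω'*ξ^2*t)) := by
      have h := mul_le_mul_of_nonneg_right hEt (inv_nonneg.2 hexpt.le)
      rw [mul_assoc, mul_inv_cancel₀ (ne_of_gt hexpt), mul_one] at h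
      rw [Real.exp_neg]
      exact h
    have hue := mul_le_mul_of_nonneg_right hu hexpneg.le
    have hA0e : 0 ≤ (‖V 0 0‖^2 + ‖V 0 1‖^2) * Real.exp (-(ω'*ξ^2*t)) :=
      mul_nonneg hA00 hexpneg.le
    linarith [hl, hEinv, hue, hA0e]
  calc Real.sqrt (‖V t 0‖^2 + ‖V t 1‖^2)
      ≤ Real.sqrt (3 * Real.exp (-(ω'*ξ^2*t)) * (‖V 0 0‖^2 + ‖V 0 1‖^2)) :=
        Real.sqrt_le_sqrt hchain
    _ = Real.sqrt 3 * Real.exp (-ω₀*ξ^2*t) *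
          Real.sqrt (‖V 0 0‖^2 + ‖V 0 1‖^2) := by
        rw [Real.sqrt_mul (by positivity : (0:ℝ) ≤ 3 * Real.exp (-(ω'*ξ^2*t))),
          Real.sqrt_mul (by norm_num : (0:ℝ) ≤ 3)]
        have he2 : Real.exp (-(ω'*ξ^2*t)) = Real.exp (-ω₀*ξ^2*t)^2 := by
          rw [show -(ω'*ξ^2*t) = (-ω₀*ξ^2*t) + (-ω₀*ξ^2*t) from by rw [hω'def]; ring,
            Real.exp_add]
          ring
        rw [he2, Real.sqrt_sq (Real.exp_nonneg _)]
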